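/- A finite point-mass system in the hyperbolic plane is balanced (has total signed moment zero) with respect to every straight line that contains the location of its center of mass. -/

import Mathlib

open Real UpperHalfPlane

noncomputable section

/-- `Z` lies on the geodesic segment from `X` to `Y` (hyperbolic betweenness). -/
def HBtw (X Z Y : ℍ) : Prop := dist X Z + dist Z Y = dist X Y

/-- `(Z, z)` is the hyperbolic centroid of the point-masses `(X, x)` and `(Y, y)`:
`Z` lies between `X` and `Y`, the moments about `Z` balance, and
`z = x·cosh d(X,Z) + y·cosh d(Y,Z)`. -/
def IsCentroid (X : ℍ) (x : ℝ) (Y : ℍ) (y : ℝ) (Z : ℍ) (z : ℝ) : Prop :=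
  HBtw X Z Y ∧ x * Real.sinh (dist X Z) = y * Real.sinh (dist Y Z) ∧
    z = x * Real.cosh (dist X Z) + y * Real.cosh (dist Y Z)

/-- A hyperbolic line in the upper half-plane model: a vertical ray or a
semicircle centered on the real axis. -/
inductive HLine : Type
  | vertical (a : ℝ) : HLine
  | circle (c r : ℝ) (hr : 0 < r) : HLine

/-- The set of points of a hyperbolic line. -/
def HLine.carrier : HLine → Set ℍ
  | .vertical a => {z : ℍ | (z : ℂ).re = a}
  | .circle c r _ => {z : ℍ | ‖(z : ℂ) - (c : ℂ)‖ = r}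

/-- The side function of a (directed) hyperbolic line: `1` on one open half-plane,
`-1` on the other, `0` on the line itself. -/
def HLine.sgn : HLine → ℍ → ℝ
  | .vertical a, z => Real.sign ((z : ℂ).re - a)
  | .circle c r _, z => Real.sign (‖(z : ℂ) - (c : ℂ)‖ - r)

/-- `(C, c)` is the center of mass of the finite point-mass system
`(X i, x i), i = 0, …, n`, obtained by iterating the binary centroid operation. -/
def IsSystemCentroid : {n : ℕ} → (Fin (n + 1) → ℍ) → (Fin (n + 1) → ℝ) → ℍ → ℝ → Prop
  | 0, X, x, C, c => C = X 0 ∧ c = x 0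
  | n + 1, X, x, C, c => ∃ C' c', IsSystemCentroid (Fin.init X) (Fin.init x) C' c' ∧
      IsCentroid C' c' (X (Fin.last (n + 1))) (x (Fin.last (n + 1))) C c

/-!
In the hyperboloid model `z ↦ z.toHyperboloid ∈ ℝ³`, the Lorentz product of two points is the
`cosh` of their hyperbolic distance. There the binary centroid is linear: the geodesic through
`X` and `Y` gives `sinh d(X,Y) • Z = sinh d(Z,Y) • X + sinh d(X,Z) • Y`, and with the balance
condition this becomes `x • X + y • Y = z • Z`, so by induction `∑ xᵢ • Xᵢ = c • C`. A line is
`{w | ⟨n, w⟩ = 0}` for a unit spacelike normal `n`, and the signed `sinh` of the distance to it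
is the linear functional `⟨n, ·⟩`. The total moment is therefore `ε ⟨n, c • C⟩ = 0`.
-/

namespace Real

theorem sign_mul_abs_self (r : ℝ) : sign r * |r| = r := by
  rcases lt_trichotomy r 0 with h | rfl | h
  · rw [sign_of_neg h, abs_of_neg h, neg_one_mul, neg_neg]
  · rw [abs_zero, mul_zero]
  · rw [sign_of_pos h, abs_of_pos h, one_mul]

theorem sign_mul_of_pos (a : ℝ) {b : ℝ} (hb : 0 < b) : sign (a * b) = sign a := by
  rcases lt_trichotomy a 0 with h | rfl | h
  · rw [sign_of_neg h, sign_of_neg (mul_neg_of_neg_of_pos h hb)]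
  · rw [zero_mul]
  · rw [sign_of_pos h, sign_of_pos (mul_pos h hb)]

end Real

def lorentzForm : LinearMap.BilinForm ℝ (Fin 3 → ℝ) :=
  LinearMap.mk₂ ℝ (fun u v => u 0 * v 0 - u 1 * v 1 - u 2 * v 2)
    (fun _ _ _ => by simp only [Pi.add_apply]; ring)
    (fun _ _ _ => by simp only [Pi.smul_apply, smul_eq_mul]; ring)
    (fun _ _ _ => by simp only [Pi.add_apply]; ring)
    (fun _ _ _ => by simp only [Pi.smul_apply, smul_eq_mul]; ring)

theorem lorentzForm_apply (u v : Fin 3 → ℝ) :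
    lorentzForm u v = u 0 * v 0 - u 1 * v 1 - u 2 * v 2 := rfl

theorem lorentzForm_comm (u v : Fin 3 → ℝ) : lorentzForm u v = lorentzForm v u := by
  simp only [lorentzForm_apply]; ring

theorem eq_zero_of_isotropic_of_orthogonal {w p : Fin 3 → ℝ} (hp : 0 < lorentzForm p p)
    (hww : lorentzForm w w = 0) (hwp : lorentzForm w p = 0) : w = 0 := by
  rw [lorentzForm_apply] at hp hww hwp
  have lagrange : w 0 ^ 2 * (p 0 * p 0 - p 1 * p 1 - p 2 * p 2) = -(w 1 * p 2 - w 2 * p 1) ^ 2 := by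
    linear_combination (w 0 * p 0 + w 1 * p 1 + w 2 * p 2) * hwp - (p 1 ^ 2 + p 2 ^ 2) * hww
  have h0 : w 0 = 0 := by
    refine pow_eq_zero_iff two_ne_zero |>.mp (le_antisymm ?_ (sq_nonneg _))
    exact nonpos_of_mul_nonpos_left (lagrange ▸ neg_nonpos.2 (sq_nonneg _)) hp
  have h1 : w 1 = 0 := by nlinarith [sq_nonneg (w 1), sq_nonneg (w 2)]
  have h2 : w 2 = 0 := by nlinarith [sq_nonneg (w 1), sq_nonneg (w 2)]
  ext i; fin_cases i <;> assumption

namespace UpperHalfPlane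

def toHyperboloid (z : ℍ) : Fin 3 → ℝ :=
  ![(z.re ^ 2 + z.im ^ 2 + 1) / (2 * z.im), z.re / z.im, (z.re ^ 2 + z.im ^ 2 - 1) / (2 * z.im)]

theorem lorentzForm_toHyperboloid (z w : ℍ) :
    lorentzForm z.toHyperboloid w.toHyperboloid = cosh (dist z w) := by
  have := z.im_pos.ne'
  have := w.im_pos.ne'
  simp only [lorentzForm_apply, toHyperboloid, cosh_dist', Matrix.cons_val]
  field_simp
  ring

theorem lorentzForm_toHyperboloid_self (z : ℍ) :
    lorentzForm z.toHyperboloid z.toHyperboloid = 1 := by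
  rw [lorentzForm_toHyperboloid, dist_self, cosh_zero]

theorem exists_toHyperboloid_eq {q : Fin 3 → ℝ} (hq : lorentzForm q q = 1) (hq0 : 0 < q 0) :
    ∃ z : ℍ, z.toHyperboloid = q := by
  rw [lorentzForm_apply] at hq
  have hpos : 0 < q 0 - q 2 := by nlinarith [sq_nonneg (q 1)]
  refine ⟨⟨⟨q 1 / (q 0 - q 2), 1 / (q 0 - q 2)⟩, by simpa using hpos⟩, ?_⟩
  ext i
  fin_cases i <;>
    simp only [toHyperboloid, re, im, Fin.isValue, Fin.zero_eta, Fin.mk_one, Fin.reduceFinMk,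
      Matrix.cons_val] <;>
    field_simp <;>
    linear_combination -hq

theorem exists_smul_toHyperboloid_eq {v : Fin 3 → ℝ} (hv : 0 < lorentzForm v v) :
    ∃ (k : ℝ) (z : ℍ), v = k • z.toHyperboloid := by
  have hv0 : v 0 ≠ 0 := by
    rw [lorentzForm_apply] at hv
    rintro h
    nlinarith [h, sq_nonneg (v 1), sq_nonneg (v 2)]
  obtain ⟨k, hk, hkv⟩ : ∃ k : ℝ, k ^ 2 = lorentzForm v v ∧ 0 < k * v 0 := by
    have hs := Real.sqrt_pos.2 hv
    rcases hv0.lt_or_gt with h | h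
    · exact ⟨-√(lorentzForm v v), by rw [neg_sq, sq_sqrt hv.le], by nlinarith⟩
    · exact ⟨√(lorentzForm v v), sq_sqrt hv.le, by positivity⟩
  have hk0 : k ≠ 0 := by rintro rfl; simp at hkv
  obtain ⟨z, hz⟩ := exists_toHyperboloid_eq (q := k⁻¹ • v)
    (by simp only [map_smul, LinearMap.smul_apply, smul_eq_mul, ← hk]; field_simp)
    (by
      rw [Pi.smul_apply, smul_eq_mul, inv_mul_eq_div, ← mul_div_mul_left _ _ hk0]
      exact div_pos hkv (mul_self_pos.2 hk0))
  exact ⟨k, z, by rw [hz, smul_inv_smul₀ hk0]⟩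

theorem sinh_infDist_eq_abs_lorentzForm {n : Fin 3 → ℝ} (hn : lorentzForm n n = -1) (z : ℍ) :
    sinh (Metric.infDist z {w : ℍ | lorentzForm n w.toHyperboloid = 0}) =
      |lorentzForm n z.toHyperboloid| := by
  set t := lorentzForm n z.toHyperboloid
  set L := {w : ℍ | lorentzForm n w.toHyperboloid = 0}
  -- `v` is a positive multiple of the foot of the perpendicular from `z` to the line.
  set v := z.toHyperboloid + t • n
  have hv : ∀ w ∈ L, lorentzForm v w.toHyperboloid = cosh (dist z w) := by
    intro w hw
    simp only [v, map_add, map_smul, LinearMap.add_apply, LinearMap.smul_apply, smul_eq_mul]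
    rw [lorentzForm_toHyperboloid, hw.out, mul_zero, add_zero]
  have hvv : lorentzForm v v = 1 + t ^ 2 := by
    simp only [v, map_add, map_smul, LinearMap.add_apply, LinearMap.smul_apply, smul_eq_mul,
      lorentzForm_toHyperboloid_self, hn, lorentzForm_comm z.toHyperboloid n]
    ring
  obtain ⟨k, foot, hfoot⟩ := exists_smul_toHyperboloid_eq (v := v) (by rw [hvv]; positivity)
  have hk2 : k ^ 2 = 1 + t ^ 2 := by
    simp only [← hvv, hfoot, map_smul, LinearMap.smul_apply, lorentzForm_toHyperboloid_self,
      smul_eq_mul]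
    ring
  have hfootL : foot ∈ L := by
    have hnv : lorentzForm n v = 0 := by
      simp only [v, map_add, map_smul, smul_eq_mul, hn]
      ring
    rw [hfoot, map_smul, smul_eq_mul] at hnv
    exact (mul_eq_zero.1 hnv).resolve_left (by rintro rfl; nlinarith)
  have hcosh : ∀ w ∈ L, cosh (dist z w) = k * cosh (dist foot w) := fun w hw => by
    simp only [← hv w hw, hfoot, map_smul, LinearMap.smul_apply, lorentzForm_toHyperboloid,
      smul_eq_mul]
  have hk : cosh (dist z foot) = k := by simpa using hcosh foot hfootL
  have hinf : Metric.infDist z L = dist z foot := by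
    refine le_antisymm (Metric.infDist_le_dist_of_mem hfootL)
      ((Metric.le_infDist ⟨foot, hfootL⟩).2 fun w hw => ?_)
    have hle : cosh (dist z foot) ≤ cosh (dist z w) := by
      rw [hcosh w hw, hk]
      exact le_mul_of_one_le_right (hk ▸ (cosh_pos _).le) (one_le_cosh _)
    simpa only [cosh_le_cosh, abs_of_nonneg dist_nonneg] using hle
  rw [hinf]
  refine (sq_eq_sq₀ (sinh_nonneg_iff.2 dist_nonneg) (abs_nonneg t)).1 ?_
  rw [sq_abs, sinh_sq, hk]
  linarith

end UpperHalfPlane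

open UpperHalfPlane

theorem HBtw.sinh_dist_smul_toHyperboloid {X Z Y : ℍ} (h : HBtw X Z Y) :
    sinh (dist X Y) • Z.toHyperboloid =
      sinh (dist Z Y) • X.toHyperboloid + sinh (dist X Z) • Y.toHyperboloid := by
  have hXY : dist X Y = dist X Z + dist Z Y := h.symm
  rw [eq_comm, ← sub_eq_zero]
  apply eq_zero_of_isotropic_of_orthogonal (p := Z.toHyperboloid)
    (by rw [lorentzForm_toHyperboloid_self]; exact one_pos)
  all_goals
    simp only [map_add, map_sub, map_smul, LinearMap.add_apply, LinearMap.sub_apply,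
      LinearMap.smul_apply, smul_eq_mul, lorentzForm_toHyperboloid, dist_self, cosh_zero,
      dist_comm Y X, dist_comm Z X, dist_comm Y Z, hXY, cosh_add, sinh_add]
  · linear_combination (-sinh (dist X Z) ^ 2) * cosh_sq (dist Z Y)
      - sinh (dist Z Y) ^ 2 * cosh_sq (dist X Z)
  · ring

theorem IsCentroid.smul_add_smul_toHyperboloid {X Y Z : ℍ} {x y z : ℝ}
    (h : IsCentroid X x Y y Z z) :
    x • X.toHyperboloid + y • Y.toHyperboloid = z • Z.toHyperboloid := by
  obtain ⟨hbtw, hmoment, rfl⟩ := h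
  rw [dist_comm Y Z] at hmoment ⊢
  by_cases hs : sinh (dist X Y) = 0
  · obtain rfl : X = Y := dist_eq_zero.1 (sinh_eq_zero.1 hs)
    have hXZ : dist X Z = 0 := by
      have hXX : dist X Z + dist Z X = dist X X := hbtw
      rw [dist_self, dist_comm Z X] at hXX
      linarith [dist_nonneg (x := X) (y := Z)]
    obtain rfl : X = Z := dist_eq_zero.1 hXZ
    simp [add_smul]
  · have hsinh : sinh (dist X Y) =
        sinh (dist X Z) * cosh (dist Z Y) + cosh (dist X Z) * sinh (dist Z Y) := by
      rw [← sinh_add, hbtw]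
    apply smul_right_injective _ hs
    linear_combination (norm := module)
      -(x * cosh (dist X Z) + y * cosh (dist Z Y)) • hbtw.sinh_dist_smul_toHyperboloid
      + hsinh • (x • X.toHyperboloid + y • Y.toHyperboloid)
      + (cosh (dist Z Y) * hmoment) • X.toHyperboloid
      - (cosh (dist X Z) * hmoment) • Y.toHyperboloid

theorem IsSystemCentroid.sum_smul_toHyperboloid :
    ∀ {n : ℕ} {X : Fin (n + 1) → ℍ} {x : Fin (n + 1) → ℝ} {C : ℍ} {c : ℝ},
      IsSystemCentroid X x C c → ∑ i, x i • (X i).toHyperboloid = c • C.toHyperboloid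
  | 0, _, _, _, _, ⟨rfl, rfl⟩ => by simp
  | _ + 1, _, _, _, _, ⟨_, _, hsys, hcen⟩ => by
    rw [Fin.sum_univ_castSucc, ← hcen.smul_add_smul_toHyperboloid,
      ← hsys.sum_smul_toHyperboloid]
    rfl

namespace HLine

/-- A unit spacelike normal, chosen so that `lorentzForm ℓ.normal z.toHyperboloid` equals
`(z.re - a) / z.im` for `vertical a` and `(‖z - c‖ ^ 2 - r ^ 2) / (2 * r * z.im)` for
`circle c r`. -/
def normal : HLine → Fin 3 → ℝ
  | .vertical a => ![-a, -1, -a]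
  | .circle c r _ => ![(1 + c ^ 2 - r ^ 2) / (2 * r), c / r, (c ^ 2 - r ^ 2 - 1) / (2 * r)]

theorem lorentzForm_normal_self (ℓ : HLine) : lorentzForm ℓ.normal ℓ.normal = -1 := by
  cases ℓ with
  | vertical a => simp [normal, lorentzForm_apply]
  | circle c r hr =>
    simp only [normal, lorentzForm_apply, Matrix.cons_val]
    field_simp
    ring

theorem sign_lorentzForm_normal (ℓ : HLine) (z : ℍ) :
    Real.sign (lorentzForm ℓ.normal z.toHyperboloid) = ℓ.sgn z := by
  have hz := z.im_pos
  cases ℓ with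
  | vertical a =>
    have : lorentzForm (vertical a).normal z.toHyperboloid = (z.re - a) * z.im⁻¹ := by
      simp only [normal, lorentzForm_apply, toHyperboloid, Matrix.cons_val]
      field_simp
      ring
    rw [this, Real.sign_mul_of_pos _ (inv_pos.2 hz)]
    rfl
  | circle c r hr =>
    have hnorm : ‖(z : ℂ) - c‖ ^ 2 = (z.re - c) ^ 2 + z.im ^ 2 := by
      rw [Complex.sq_norm, Complex.normSq_apply]
      simp only [Complex.sub_re, coe_re, Complex.ofReal_re, Complex.sub_im, coe_im,
        Complex.ofReal_im, sub_zero]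
      ring
    have : lorentzForm (circle c r hr).normal z.toHyperboloid =
        (‖(z : ℂ) - c‖ - r) * ((‖(z : ℂ) - c‖ + r) / (2 * r * z.im)) := by
      rw [show (‖(z : ℂ) - c‖ - r) * ((‖(z : ℂ) - c‖ + r) / (2 * r * z.im)) =
        ((z.re - c) ^ 2 + z.im ^ 2 - r ^ 2) / (2 * r * z.im) by rw [← hnorm]; ring]
      simp only [normal, lorentzForm_apply, toHyperboloid, Matrix.cons_val]
      field_simp
      ring
    rw [this, Real.sign_mul_of_pos _ (by positivity)]
    rfl

theorem sgn_eq_zero_iff {ℓ : HLine} {z : ℍ} : ℓ.sgn z = 0 ↔ z ∈ ℓ.carrier := by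
  cases ℓ <;> simp [sgn, carrier, sub_eq_zero]

theorem carrier_eq (ℓ : HLine) :
    ℓ.carrier = {z : ℍ | lorentzForm ℓ.normal z.toHyperboloid = 0} := by
  ext z
  rw [← sgn_eq_zero_iff, ← sign_lorentzForm_normal, Real.sign_eq_zero_iff]
  rfl

theorem sgn_mul_sinh_infDist (ℓ : HLine) (z : ℍ) :
    ℓ.sgn z * sinh (Metric.infDist z ℓ.carrier) = lorentzForm ℓ.normal z.toHyperboloid := by
  rw [carrier_eq, sinh_infDist_eq_abs_lorentzForm ℓ.lorentzForm_normal_self,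
    ← sign_lorentzForm_normal, Real.sign_mul_abs_self]

end HLine

theorem balanced_through_center_of_mass_general (n : ℕ) (X : Fin (n + 1) → ℍ)
    (x : Fin (n + 1) → ℝ) (C : ℍ) (c : ℝ)
    (h : IsSystemCentroid X x C c) (ℓ : HLine) (hC : C ∈ ℓ.carrier)
    (ε : ℝ) :
    ∑ i, ε * ℓ.sgn (X i) * x i * Real.sinh (Metric.infDist (X i) ℓ.carrier) = 0 := by
  have hCn : lorentzForm ℓ.normal C.toHyperboloid = 0 := by rwa [ℓ.carrier_eq] at hC
  calc ∑ i, ε * ℓ.sgn (X i) * x i * Real.sinh (Metric.infDist (X i) ℓ.carrier)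
      = ε * lorentzForm ℓ.normal (∑ i, x i • (X i).toHyperboloid) := by
        simp only [map_sum, map_smul, smul_eq_mul, Finset.mul_sum, ← ℓ.sgn_mul_sinh_infDist]
        exact Finset.sum_congr rfl fun i _ => by ring
    _ = 0 := by rw [h.sum_smul_toHyperboloid, map_smul, hCn, smul_zero, mul_zero]

/-- Corollary 3.6: a finite point-mass system is balanced (total signed moment zero)
with respect to every directed line containing the location of its center of mass. -/
theorem balanced_through_center_of_mass (n : ℕ) (X : Fin (n + 1) → ℍ)
    (x : Fin (n + 1) → ℝ) (hx : ∀ i, 0 < x i) (C : ℍ) (c : ℝ)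
    (h : IsSystemCentroid X x C c) (ℓ : HLine) (hC : C ∈ ℓ.carrier)
    (ε : ℝ) (hε : ε = 1 ∨ ε = -1) :
    ∑ i, ε * ℓ.sgn (X i) * x i * Real.sinh (Metric.infDist (X i) ℓ.carrier) = 0 :=
  balanced_through_center_of_mass_general n X x C c h ℓ hC ε
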